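/- Define β_{m,n} = (T_n ∘ ⋯ ∘ T_{m+n−1}) ∘ ⋯ ∘ (T_2 ∘ ⋯ ∘ T_{m+1}) ∘ (T_1 ∘ ⋯ ∘ T_m) as an automorphism of the free group F(ρ_1, ..., ρ_{m+n}), where the T_i are as above. Let ι be the operation sending each word to the word with every generator inverted, so that ι^j(ρ_k) = ρ_k if j is even and ρ_k⁻¹ if j is odd. Then for 1 ≤ i ≤ n, β_{m,n}(ρ_{m+i}) = ρ_i; and for 1 ≤ i ≤ m, β_{m,n}(ρ_i) = ρ_1 ι(ρ_2) ⋯ ι^{n−1}(ρ_n) ι^n(ρ_{i+n}) ι^{n−1}(ρ_n) ⋯ ι(ρ_2) ρ_1. -/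
import Mathlib


/-- The endomorphism `T_i` of the free group on generators `ρ_1, ρ_2, …`,
determined by `T_i(ρ_i) = ρ_i ρ_{i+1}⁻¹ ρ_i`, `T_i(ρ_{i+1}) = ρ_i`, and
`T_i(ρ_j) = ρ_j` otherwise. -/
def twistEndo (i : ℕ) : FreeGroup ℕ →* FreeGroup ℕ :=
  FreeGroup.lift fun j =>
    if j = i then FreeGroup.of i * (FreeGroup.of (i + 1))⁻¹ * FreeGroup.of i
    else if j = i + 1 then FreeGroup.of i
    else FreeGroup.of j

/-- The composite `T_{i,j} = T_i ∘ T_{i+1} ∘ ⋯ ∘ T_j`. -/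
def twistComp (i j : ℕ) : FreeGroup ℕ →* FreeGroup ℕ :=
  ((List.range (j + 1 - i)).map (fun t => twistEndo (i + t))).foldr
    MonoidHom.comp (MonoidHom.id _)

/-- The block composition
`β_{m,n} = (T_n ∘ ⋯ ∘ T_{m+n−1}) ∘ ⋯ ∘ (T_2 ∘ ⋯ ∘ T_{m+1}) ∘ (T_1 ∘ ⋯ ∘ T_m)`. -/
def blockEndo (m n : ℕ) : FreeGroup ℕ →* FreeGroup ℕ :=
  ((List.range n).reverse.map (fun j => twistComp (j + 1) (j + m))).foldr
    MonoidHom.comp (MonoidHom.id _)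

/-- `ι^j(ρ_k)`: the generator `ρ_k` for `j` even, its inverse for `j` odd. -/
def iotaPow (j k : ℕ) : FreeGroup ℕ :=
  if Even j then FreeGroup.of k else (FreeGroup.of k)⁻¹

lemma twistEndo_of (i j : ℕ) :
    twistEndo i (FreeGroup.of j) =
      if j = i then FreeGroup.of i * (FreeGroup.of (i + 1))⁻¹ * FreeGroup.of i
      else if j = i + 1 then FreeGroup.of i
      else FreeGroup.of j := FreeGroup.lift_apply_of

lemma twistComp_empty (i : ℕ) : twistComp (i + 1) i = MonoidHom.id _ := by
  simp [twistComp]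

lemma twistComp_cons (i j : ℕ) (h : i ≤ j) :
    twistComp i j = (twistEndo i).comp (twistComp (i + 1) j) := by
  unfold twistComp
  have h1 : j + 1 - i = (j + 1 - (i + 1)) + 1 := by omega
  rw [h1, List.range_succ_eq_map]
  have h2 : (fun t => twistEndo (i + (t + 1))) = fun t => twistEndo (i + 1 + t) := by
    funext t; congr 1; omega
  simp [List.map_map, Function.comp_def, h2]

lemma twistComp_of (l : ℕ) : ∀ i k,
    twistComp i (i + l) (FreeGroup.of k) =
      if k < i ∨ i + l + 1 < k then FreeGroup.of k
      else if k = i + l + 1 then FreeGroup.of i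
      else FreeGroup.of i * (FreeGroup.of (k + 1))⁻¹ * FreeGroup.of i := by
  induction l with
  | zero =>
    intro i k
    rw [show i + 0 = i from rfl, twistComp_cons i i le_rfl, twistComp_empty]
    simp only [MonoidHom.comp_apply, MonoidHom.id_apply, twistEndo_of]
    split_ifs <;> first | rfl | omega | (subst_vars; rfl) | (congr <;> omega)
  | succ l ih =>
    intro i k
    rw [show i + (l + 1) = i + l + 1 by omega, twistComp_cons i (i + l + 1) (by omega),
      MonoidHom.comp_apply]
    rw [show i + l + 1 = (i + 1) + l by omega, ih (i + 1) k]
    split_ifs with h1 h2 h3 <;>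
      simp only [map_mul, map_inv, twistEndo_of] <;>
      split_ifs <;> first | rfl | omega | (subst_vars; rfl) | (congr <;> omega) | (exfalso; omega)

lemma blockEndo_zero (m : ℕ) : blockEndo m 0 = MonoidHom.id _ := by
  simp [blockEndo]

lemma blockEndo_succ (m n : ℕ) :
    blockEndo m (n + 1) = (twistComp (n + 1) (n + m)).comp (blockEndo m n) := by
  unfold blockEndo
  rw [List.range_succ]
  simp

/-- Evaluation of the block `twistComp (n+1) (n+m)` on generators, `m ≥ 1`. -/
lemma twistComp_block (m n k : ℕ) (hm : 1 ≤ m) :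
    twistComp (n + 1) (n + m) (FreeGroup.of k) =
      if k < n + 1 ∨ n + m + 1 < k then FreeGroup.of k
      else if k = n + m + 1 then FreeGroup.of (n + 1)
      else FreeGroup.of (n + 1) * (FreeGroup.of (k + 1))⁻¹ * FreeGroup.of (n + 1) := by
  obtain ⟨p, rfl⟩ : ∃ p, m = p + 1 := ⟨m - 1, by omega⟩
  have h : n + (p + 1) = (n + 1) + p := by omega
  rw [h]
  exact twistComp_of p (n + 1) k

lemma map_prod_fix (φ : FreeGroup ℕ →* FreeGroup ℕ) (L : List (FreeGroup ℕ))
    (h : ∀ x ∈ L, φ x = x) : φ L.prod = L.prod := by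
  rw [map_list_prod]
  rw [List.map_congr_left h]
  simp

lemma blockEndo_aux (m : ℕ) (hm : 1 ≤ m) : ∀ n : ℕ,
    (∀ i, 1 ≤ i → i ≤ n → blockEndo m n (FreeGroup.of (m + i)) = FreeGroup.of i) ∧
    (∀ k, m + n < k → blockEndo m n (FreeGroup.of k) = FreeGroup.of k) ∧
    (∀ i, 1 ≤ i → i ≤ m →
      blockEndo m n (FreeGroup.of i)
        = ((List.range n).map (fun t => iotaPow t (t + 1))).prod *
            iotaPow n (i + n) *
            ((List.range n).reverse.map (fun t => iotaPow t (t + 1))).prod) := by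
  intro n
  induction n with
  | zero =>
    refine ⟨fun i h1 h2 => by omega, fun k hk => by simp [blockEndo_zero], fun i h1 h2 => ?_⟩
    simp [blockEndo_zero, iotaPow]
  | succ n ih =>
    obtain ⟨ih1, ih2, ih3⟩ := ih
    have fixlow : ∀ x ∈ (List.range n).map (fun t => iotaPow t (t + 1)),
        twistComp (n + 1) (n + m) x = x := by
      intro x hx
      simp only [List.mem_map, List.mem_range] at hx
      obtain ⟨t, ht, rfl⟩ := hx
      unfold iotaPow
      split_ifs
      · rw [twistComp_block m n _ hm, if_pos (Or.inl (by omega))]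
      · rw [map_inv, twistComp_block m n _ hm, if_pos (Or.inl (by omega))]
    have fixlow' : ∀ x ∈ ((List.range n).reverse).map (fun t => iotaPow t (t + 1)),
        twistComp (n + 1) (n + m) x = x := by
      intro x hx
      apply fixlow
      simpa using hx
    refine ⟨?_, ?_, ?_⟩
    · intro i h1 h2
      rw [blockEndo_succ, MonoidHom.comp_apply]
      rcases Nat.lt_or_ge i (n + 1) with h | h
      · rw [ih1 i h1 (by omega), twistComp_block m n _ hm]
        simp only [if_pos (Or.inl (by omega : i < n + 1))]
      · have hi : i = n + 1 := by omega
        subst hi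
        rw [ih2 (m + (n + 1)) (by omega), twistComp_block m n _ hm]
        rw [if_neg (by omega), if_pos (by omega)]
    · intro k hk
      rw [blockEndo_succ, MonoidHom.comp_apply, ih2 k (by omega),
        twistComp_block m n _ hm, if_pos (Or.inr (by omega))]
    · intro i h1 h2
      rw [blockEndo_succ, MonoidHom.comp_apply, ih3 i h1 h2]
      rw [map_mul, map_mul, map_prod_fix _ _ fixlow, map_prod_fix _ _ fixlow']
      rw [List.range_succ]
      simp only [List.reverse_append, List.map_append, List.prod_append, List.map_cons,
        List.map_nil, List.prod_cons, List.prod_nil, List.reverse_cons, List.reverse_nil,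
        List.singleton_append, List.nil_append, mul_one]
      have hmid : twistComp (n + 1) (n + m) (iotaPow n (i + n))
          = iotaPow n (n + 1) * iotaPow (n + 1) (i + (n + 1)) * iotaPow n (n + 1) := by
        unfold iotaPow
        have hev : ¬ Even (n + 1) ↔ Even n := by
          simp [Nat.even_add_one]
        rcases Nat.even_or_odd n with he | ho
        · rw [if_pos he, if_pos he, if_neg (by simp [Nat.even_add_one, he])]
          rw [twistComp_block m n _ hm, if_neg (by omega), if_neg (by omega)]
          rw [show i + n + 1 = i + (n + 1) by omega]
        · have hne : ¬ Even n := Nat.not_even_iff_odd.mpr ho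
          rw [if_neg hne, if_neg hne, if_pos (by simp [Nat.even_add_one, hne])]
          rw [map_inv, twistComp_block m n _ hm, if_neg (by omega), if_neg (by omega)]
          rw [mul_inv_rev, mul_inv_rev, inv_inv]
          rw [show i + n + 1 = i + (n + 1) by omega]
          group
      rw [hmid]
      group


/-- The block-braid action on the free group: for `1 ≤ i ≤ n`,
`β_{m,n}(ρ_{m+i}) = ρ_i`, and for `1 ≤ i ≤ m`,
`β_{m,n}(ρ_i) = ρ_1 ι(ρ_2) ⋯ ι^{n−1}(ρ_n) · ι^n(ρ_{i+n}) · ι^{n−1}(ρ_n) ⋯ ι(ρ_2) ρ_1`. -/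
theorem blockEndo_eval (m n : ℕ) (hm : 1 ≤ m) :
    (∀ i, 1 ≤ i → i ≤ n → blockEndo m n (FreeGroup.of (m + i)) = FreeGroup.of i) ∧
    (∀ i, 1 ≤ i → i ≤ m →
      blockEndo m n (FreeGroup.of i)
        = ((List.range n).map (fun t => iotaPow t (t + 1))).prod *
            iotaPow n (i + n) *
            ((List.range n).reverse.map (fun t => iotaPow t (t + 1))).prod) :=
  ⟨(blockEndo_aux m hm n).1, (blockEndo_aux m hm n).2.2⟩
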